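/- arXiv:1711.07621 — 10 statements merged into one kernel-verified Lean document; each statement's English description precedes it below -/
import Mathlib

section
/- If an allocation is envy-free, then it is a groupwise maximin share (GMMS) allocation: for every agent i and every subset J of agents containing i, the value v_i(A_i) is at least the |J|-maximin share of agent i restricted to the union of bundles allocated to agents in J. -/
open Finset

/-- The `k`-maximin share of a valuation `v` (additive over goods) restricted
to the set of goods `S`: the max over `k`-partitions of `S` of the minimum
bundle value. -/
noncomputable def mu {α : Type*} [Fintype α] [DecidableEq α]
    (v : α → ℝ) (k : ℕ) (S : Finset α) : ℝ :=
  ⨆ P : α → Fin k, ⨅ j : Fin k, ∑ g ∈ S.filter (fun g => P g = j), v g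

/-- Envy-free allocations are groupwise maximin share (GMMS) allocations. -/
theorem ef_implies_gmms {α : Type*} [Fintype α] [DecidableEq α] {n : ℕ}
    (v : Fin n → α → ℝ) (hv : ∀ i g, 0 ≤ v i g)
    (A : Fin n → Finset α)
    (hdisj : ∀ i j, i ≠ j → Disjoint (A i) (A j))
    (hcover : Finset.univ.biUnion A = Finset.univ)
    (hEF : ∀ i j : Fin n, ∑ g ∈ A j, v i g ≤ ∑ g ∈ A i, v i g) :
    ∀ (i : Fin n) (J : Finset (Fin n)), i ∈ J →
      mu (v i) J.card (J.biUnion A) ≤ ∑ g ∈ A i, v i g := by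
  intro i J hiJ
  set k := J.card with hk
  have hkpos : 0 < k := Finset.card_pos.mpr ⟨i, hiJ⟩
  haveI : NeZero k := ⟨hkpos.ne'⟩
  set c := ∑ g ∈ A i, v i g with hc
  apply ciSup_le
  intro P
  -- total value over the parts equals value of the union
  have htotal : ∑ j : Fin k, ∑ g ∈ (J.biUnion A).filter (fun g => P g = j), v i g
      = ∑ g ∈ J.biUnion A, v i g := by
    rw [← Finset.sum_fiberwise (J.biUnion A) P (v i)]
  have hunion : ∑ g ∈ J.biUnion A, v i g = ∑ j ∈ J, ∑ g ∈ A j, v i g := by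
    apply Finset.sum_biUnion
    intro a _ b _ hab
    exact hdisj a b hab
  have hbound : ∑ j ∈ J, ∑ g ∈ A j, v i g ≤ ∑ _j ∈ J, c :=
    Finset.sum_le_sum fun j _ => hEF i j
  have hsum_le : ∑ j : Fin k, ∑ g ∈ (J.biUnion A).filter (fun g => P g = j), v i g
      ≤ ∑ _j : Fin k, c := by
    rw [htotal, hunion]
    refine hbound.trans ?_
    simp [hk]
  obtain ⟨j0, _, hj0⟩ := Finset.exists_le_of_sum_le
    (Finset.univ_nonempty : (Finset.univ : Finset (Fin k)).Nonempty) hsum_le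
  have hbdd : BddBelow (Set.range fun j : Fin k =>
      ∑ g ∈ (J.biUnion A).filter (fun g => P g = j), v i g) := by
    refine ⟨0, ?_⟩
    rintro x ⟨j, rfl⟩
    exact Finset.sum_nonneg fun g _ => hv i g
  exact le_trans (ciInf_le hbdd j0) hj0
end

section
/- Under additive valuations, every EFX allocation is an EFL allocation: if for every pair of agents i, j and every good g in A_j with v_i(g) > 0 we have v_i(A_i) ≥ v_i(A_j \ {g}), then for every pair i, j either A_j contains at most one good positively valued by i, or there exists g ∈ A_j with v_i(A_i) ≥ v_i(A_j \ {g}) and v_i(A_i) ≥ v_i({g}). -/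
open Finset

theorem efx_implies_efl_general {α : Type*} [DecidableEq α] {n : ℕ}
    (v : Fin n → α → ℝ) (hv : ∀ i g, 0 ≤ v i g)
    (A : Fin n → Finset α)
    (hEFX : ∀ i j : Fin n, ∀ g ∈ A j, 0 < v i g →
      ∑ h ∈ (A j).erase g, v i h ≤ ∑ h ∈ A i, v i h) :
    ∀ i j : Fin n,
      ((A j).filter (fun g => 0 < v i g)).card ≤ 1 ∨
      ∃ g ∈ A j, (∑ h ∈ (A j).erase g, v i h ≤ ∑ h ∈ A i, v i h) ∧
        v i g ≤ ∑ h ∈ A i, v i h := by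
  intro i j
  refine (le_or_gt _ 1).imp id fun hcard => ?_
  obtain ⟨g, hg, g', hg', hne⟩ := one_lt_card.mp hcard
  rw [mem_filter] at hg hg'
  refine ⟨g, hg.1, hEFX i j g hg.1 hg.2, ?_⟩
  -- EFX for the other positively valued good `g'` leaves `g` in the bundle.
  calc v i g ≤ ∑ h ∈ (A j).erase g', v i h :=
        single_le_sum (fun h _ => hv i h) (mem_erase.mpr ⟨hne, hg.1⟩)
    _ ≤ ∑ h ∈ A i, v i h := hEFX i j g' hg'.1 hg'.2

/-- Under additive valuations, every EFX allocation is an EFL allocation. -/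
theorem efx_implies_efl {α : Type*} [Fintype α] [DecidableEq α] {n : ℕ}
    (v : Fin n → α → ℝ) (hv : ∀ i g, 0 ≤ v i g)
    (A : Fin n → Finset α)
    (hEFX : ∀ i j : Fin n, ∀ g ∈ A j, 0 < v i g →
      ∑ h ∈ (A j).erase g, v i h ≤ ∑ h ∈ A i, v i h) :
    ∀ i j : Fin n,
      ((A j).filter (fun g => 0 < v i g)).card ≤ 1 ∨
      ∃ g ∈ A j, (∑ h ∈ (A j).erase g, v i h ≤ ∑ h ∈ A i, v i h) ∧
        v i g ≤ ∑ h ∈ A i, v i h :=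
  efx_implies_efl_general v hv A hEFX
end

section
/- Under additive valuations, every EFL allocation is a 1/2-approximate GMMS allocation: for every agent i and every set J of agents containing i, v_i(A_i) ≥ (1/2)·μ_i^{|J|}(∪_{j∈J} A_j). -/
open Finset

/-- Every EFL allocation is a 1/2-approximate GMMS allocation. -/
theorem efl_implies_half_gmms {α : Type*} [Fintype α] [DecidableEq α] {n : ℕ}
    (v : Fin n → α → ℝ) (hv : ∀ i g, 0 ≤ v i g)
    (A : Fin n → Finset α)
    (hdisj : ∀ i j, i ≠ j → Disjoint (A i) (A j))
    (hcover : Finset.univ.biUnion A = Finset.univ)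
    (hEFL : ∀ i j : Fin n,
      ((A j).filter (fun g => 0 < v i g)).card ≤ 1 ∨
      ∃ g ∈ A j, (∑ h ∈ (A j).erase g, v i h ≤ ∑ h ∈ A i, v i h) ∧
        v i g ≤ ∑ h ∈ A i, v i h) :
    ∀ (i : Fin n) (J : Finset (Fin n)), i ∈ J →
      (1 / 2) * mu (v i) J.card (J.biUnion A) ≤ ∑ g ∈ A i, v i g := by
  classical
  intro i J hiJ
  have hw0 : 0 ≤ ∑ h ∈ A i, v i h := Finset.sum_nonneg fun g _ => hv i g
  set w := ∑ h ∈ A i, v i h with hwdef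
  have hk : 0 < J.card := Finset.card_pos.mpr ⟨i, hiJ⟩
  set S := J.biUnion A with hSdef
  suffices h : mu (v i) J.card S ≤ 2 * w by linarith
  have hfk : Nonempty (Fin J.card) := ⟨⟨0, hk⟩⟩
  rw [mu]
  refine ciSup_le fun P => ?_
  set part : Fin J.card → ℝ := fun t => ∑ g ∈ S.filter (fun g => P g = t), v i g with hpart
  set B : Finset α := S.filter (fun g => 2*w < v i g) with hBdef
  have hAsub : ∀ j ∈ J, A j ⊆ S := fun j hj => Finset.subset_biUnion_of_mem A hj
  have hAi : ∀ g ∈ A i, v i g ≤ w := fun g hg =>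
    Finset.single_le_sum (fun h _ => hv i h) hg
  have hBAi : B ∩ A i = ∅ := by
    rw [Finset.eq_empty_iff_forall_notMem]
    intro g hg
    rw [Finset.mem_inter, hBdef, Finset.mem_filter] at hg
    have := hAi g hg.2
    linarith [hg.1.2]
  -- main case analysis per agent j in J
  have hcase : ∀ j ∈ J, (B ∩ A j).card ≤ 1 ∧
      ((B ∩ A j) = ∅ → ∑ h ∈ A j \ B, v i h ≤ 2*w) ∧
      ((B ∩ A j).Nonempty → ∑ h ∈ A j \ B, v i h ≤ 0) := by
    intro j hj
    rcases hEFL i j with h1 | ⟨g, hg, hg1, hg2⟩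
    · -- case 1: at most one positive good in A j
      have hsubpos : B ∩ A j ⊆ (A j).filter (fun g => 0 < v i g) := by
        intro b hb
        rw [Finset.mem_inter, hBdef, Finset.mem_filter] at hb
        rw [Finset.mem_filter]
        exact ⟨hb.2, by linarith [hb.1.2]⟩
      have hc1 : (B ∩ A j).card ≤ 1 :=
        le_trans (Finset.card_le_card hsubpos) h1
      -- the sum over A j \ B equals the sum over its positive elements
      have hfil : ∑ h ∈ (A j \ B).filter (fun g => 0 < v i g), v i h
          = ∑ h ∈ A j \ B, v i h := by
        apply Finset.sum_filter_of_ne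
        intro x _ hx
        exact lt_of_le_of_ne (hv i x) (Ne.symm hx)
      have hTsub : (A j \ B).filter (fun g => 0 < v i g) ⊆
          (A j).filter (fun g => 0 < v i g) := by
        intro x hx
        rw [Finset.mem_filter] at hx ⊢
        exact ⟨(Finset.mem_sdiff.mp hx.1).1, hx.2⟩
      refine ⟨hc1, ?_, ?_⟩
      · intro _
        rw [← hfil]
        have hb2 : ∀ x ∈ (A j \ B).filter (fun g => 0 < v i g), v i x ≤ 2*w := by
          intro x hx
          rw [Finset.mem_filter, Finset.mem_sdiff] at hx
          by_contra hcon
          push_neg at hcon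
          exact hx.1.2 (by rw [hBdef, Finset.mem_filter]; exact ⟨hAsub j hj hx.1.1, hcon⟩)
        calc ∑ h ∈ (A j \ B).filter (fun g => 0 < v i g), v i h
            ≤ ((A j \ B).filter (fun g => 0 < v i g)).card • (2*w) :=
              Finset.sum_le_card_nsmul _ _ _ hb2
          _ ≤ 1 • (2*w) := by
              apply nsmul_le_nsmul_left (by linarith)
              exact le_trans (Finset.card_le_card hTsub) h1
          _ = 2*w := one_nsmul _
      · rintro ⟨b, hb⟩
        rw [← hfil]
        have hbpos : b ∈ (A j).filter (fun g => 0 < v i g) := hsubpos hb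
        have hT : (A j \ B).filter (fun g => 0 < v i g) = ∅ := by
          rw [Finset.eq_empty_iff_forall_notMem]
          intro x hx
          have hxpos : x ∈ (A j).filter (fun g => 0 < v i g) := hTsub hx
          have : x = b := Finset.card_le_one.mp h1 x hxpos b hbpos
          rw [Finset.mem_filter, Finset.mem_sdiff] at hx
          exact hx.1.2 (this ▸ (Finset.mem_inter.mp hb).1)
        rw [hT, Finset.sum_empty]
    · -- case 2: EFL witness g
      have hall : ∀ h ∈ A j, v i h ≤ w := by
        intro x hx
        rcases eq_or_ne x g with rfl | hne
        · exact hg2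
        · calc v i x ≤ ∑ h ∈ (A j).erase g, v i h :=
                Finset.single_le_sum (fun h _ => hv i h) (Finset.mem_erase.mpr ⟨hne, hx⟩)
            _ ≤ w := hg1
      have hBe : B ∩ A j = ∅ := by
        rw [Finset.eq_empty_iff_forall_notMem]
        intro x hx
        rw [Finset.mem_inter, hBdef, Finset.mem_filter] at hx
        linarith [hall x hx.2, hx.1.2]
      refine ⟨by simp [hBe], ?_, ?_⟩
      · intro _
        have : ∑ h ∈ A j, v i h ≤ 2*w := by
          have := Finset.sum_erase_add (A j) (v i) hg
          linarith
        calc ∑ h ∈ A j \ B, v i h ≤ ∑ h ∈ A j, v i h :=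
              Finset.sum_le_sum_of_subset_of_nonneg Finset.sdiff_subset
                (fun x _ _ => hv i x)
          _ ≤ 2*w := this
      · rintro ⟨b, hb⟩
        rw [hBe] at hb
        exact absurd hb (Finset.notMem_empty b)
  -- counting and summation
  set jbig : Finset (Fin n) := J.filter (fun j => (B ∩ A j).Nonempty) with hjbigdef
  have hinotbig : i ∉ jbig := by
    rw [hjbigdef, Finset.mem_filter]
    rintro ⟨-, b, hb⟩
    rw [hBAi] at hb
    exact Finset.notMem_empty b hb
  have hjbigsub : jbig ⊆ J.erase i := by
    intro j hj
    rw [Finset.mem_erase]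
    refine ⟨fun hji => hinotbig (hji ▸ hj), (Finset.filter_subset _ _) hj⟩
  -- B = biUnion of intersections
  have hBun : B = J.biUnion (fun j => B ∩ A j) := by
    ext g
    simp only [Finset.mem_biUnion, Finset.mem_inter]
    constructor
    · intro hgB
      have hgS : g ∈ S := (Finset.mem_filter.mp hgB).1
      rw [hSdef, Finset.mem_biUnion] at hgS
      obtain ⟨j, hj, hgA⟩ := hgS
      exact ⟨j, hj, hgB, hgA⟩
    · rintro ⟨j, _, hgB, _⟩
      exact hgB
  have hBcard : B.card = jbig.card := by
    rw [hBun, Finset.card_biUnion]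
    · rw [show jbig.card = ∑ j ∈ jbig, 1 from (Finset.card_eq_sum_ones _)]
      rw [← Finset.sum_filter_add_sum_filter_not J (fun j => (B ∩ A j).Nonempty)
        (fun j => (B ∩ A j).card)]
      have h2 : ∑ j ∈ J.filter (fun j => ¬(B ∩ A j).Nonempty), (B ∩ A j).card = 0 := by
        apply Finset.sum_eq_zero
        intro j hj
        rw [Finset.mem_filter, Finset.not_nonempty_iff_eq_empty] at hj
        rw [hj.2, Finset.card_empty]
      rw [h2, add_zero]
      apply Finset.sum_congr rfl
      intro j hj
      rw [Finset.mem_filter] at hj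
      have := (hcase j hj.1).1
      have hpos := Finset.card_pos.mpr hj.2
      omega
    · intro x hx y hy hxy
      exact Finset.disjoint_left.mpr fun a ha hb =>
        (Finset.disjoint_left.mp (hdisj x y hxy)) (Finset.mem_inter.mp ha).2
          (Finset.mem_inter.mp hb).2
  set Hit : Finset (Fin J.card) := B.image P with hHitdef
  set F : Finset (Fin J.card) := Finset.univ \ Hit with hFdef
  have hHitcard : Hit.card ≤ B.card := Finset.card_image_le
  have hFcard : F.card + Hit.card = J.card := by
    rw [hFdef, Finset.card_sdiff_add_card_eq_card (Finset.subset_univ _),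
      Finset.card_univ, Fintype.card_fin]
  -- rest
  set rest : Finset (Fin n) := (J.erase i) \ jbig with hrestdef
  have hrestcard : rest.card + jbig.card = J.card - 1 := by
    rw [hrestdef, Finset.card_sdiff_add_card_eq_card hjbigsub, Finset.card_erase_of_mem hiJ]
  have hFne : F.Nonempty := by
    rw [← Finset.card_pos]
    omega
  -- the sum over parts in F
  have hsum1 : ∑ t ∈ F, part t = ∑ g ∈ S.filter (fun g => P g ∈ F), v i g := by
    rw [hpart]
    exact Finset.sum_fiberwise_eq_sum_filter S F P (v i)
  have hsub2 : S.filter (fun g => P g ∈ F) ⊆ S \ B := by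
    intro g hg
    rw [Finset.mem_filter] at hg
    rw [Finset.mem_sdiff]
    refine ⟨hg.1, fun hgB => ?_⟩
    have : P g ∈ Hit := Finset.mem_image_of_mem P hgB
    rw [hFdef, Finset.mem_sdiff] at hg
    exact hg.2.2 this
  have hsum2 : ∑ g ∈ S.filter (fun g => P g ∈ F), v i g ≤ ∑ g ∈ S \ B, v i g :=
    Finset.sum_le_sum_of_subset_of_nonneg hsub2 (fun x _ _ => hv i x)
  have hSB : S \ B = J.biUnion (fun j => A j \ B) := by
    rw [hSdef]
    ext g
    simp only [Finset.mem_sdiff, Finset.mem_biUnion]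
    constructor
    · rintro ⟨⟨j, hj, hg⟩, hgB⟩
      exact ⟨j, hj, hg, hgB⟩
    · rintro ⟨j, hj, hg, hgB⟩
      exact ⟨⟨j, hj, hg⟩, hgB⟩
  have hsum3 : ∑ g ∈ S \ B, v i g = ∑ j ∈ J, ∑ g ∈ A j \ B, v i g := by
    rw [hSB]
    apply Finset.sum_biUnion
    intro x hx y hy hxy
    exact Finset.disjoint_left.mpr fun a ha hb =>
      (Finset.disjoint_left.mp (hdisj x y hxy)) (Finset.mem_sdiff.mp ha).1
        (Finset.mem_sdiff.mp hb).1
  have hsplit : ∑ j ∈ J, ∑ g ∈ A j \ B, v i g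
      = (∑ g ∈ A i \ B, v i g) + (∑ j ∈ rest, ∑ g ∈ A j \ B, v i g)
        + (∑ j ∈ jbig, ∑ g ∈ A j \ B, v i g) := by
    rw [← Finset.sum_erase_add J _ hiJ, hrestdef,
      ← Finset.sum_sdiff hjbigsub]
    ring
  have hAiB : ∑ g ∈ A i \ B, v i g ≤ w :=
    Finset.sum_le_sum_of_subset_of_nonneg Finset.sdiff_subset (fun x _ _ => hv i x)
  have hrestle : ∑ j ∈ rest, ∑ g ∈ A j \ B, v i g ≤ rest.card • (2*w) := by
    apply Finset.sum_le_card_nsmul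
    intro j hj
    rw [hrestdef, Finset.mem_sdiff, hjbigdef, Finset.mem_filter] at hj
    have hjJ : j ∈ J := Finset.mem_of_mem_erase hj.1
    have hBe : B ∩ A j = ∅ := by
      rw [← Finset.not_nonempty_iff_eq_empty]
      intro hne
      exact hj.2 ⟨hjJ, hne⟩
    exact (hcase j hjJ).2.1 hBe
  have hbigle : ∑ j ∈ jbig, ∑ g ∈ A j \ B, v i g ≤ 0 := by
    apply Finset.sum_nonpos
    intro j hj
    rw [hjbigdef, Finset.mem_filter] at hj
    exact (hcase j hj.1).2.2 hj.2
  -- conclude: exists a part in F with small value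
  have hkey : ∑ t ∈ F, part t ≤ w + (rest.card : ℝ) * (2*w) := by
    rw [nsmul_eq_mul] at hrestle
    calc ∑ t ∈ F, part t = ∑ g ∈ S.filter (fun g => P g ∈ F), v i g := hsum1
      _ ≤ ∑ g ∈ S \ B, v i g := hsum2
      _ = ∑ j ∈ J, ∑ g ∈ A j \ B, v i g := hsum3
      _ = (∑ g ∈ A i \ B, v i g) + (∑ j ∈ rest, ∑ g ∈ A j \ B, v i g)
          + (∑ j ∈ jbig, ∑ g ∈ A j \ B, v i g) := hsplit
      _ ≤ w + (rest.card : ℝ) * (2*w) := by linarith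
  have hsumF : ∑ t ∈ F, part t ≤ ∑ t ∈ F, 2*w := by
    rw [Finset.sum_const, nsmul_eq_mul]
    have hN : rest.card + 1 ≤ F.card := by omega
    have hNc : (rest.card : ℝ) + 1 ≤ (F.card : ℝ) := by exact_mod_cast hN
    nlinarith [hkey, mul_nonneg hw0 (sub_nonneg.mpr hNc)]
  obtain ⟨t0, ht0F, ht0⟩ := Finset.exists_le_of_sum_le hFne hsumF
  have hinf : (⨅ t : Fin J.card, part t) ≤ part t0 :=
    ciInf_le (Finite.bddBelow_range part) t0
  calc (⨅ t : Fin J.card, part t) ≤ part t0 := hinf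
    _ ≤ 2*w := ht0
end

section
/- Under binary additive valuations (each v_i(g) ∈ {0,1}), every EF1 allocation is a GMMS allocation: for every agent i and every subset J of agents containing i, v_i(A_i) ≥ μ_i^{|J|}(∪_{j∈J} A_j). -/
open Finset

/-- Under binary additive valuations, every EF1 allocation is GMMS. -/
theorem binary_ef1_implies_gmms {α : Type*} [Fintype α] [DecidableEq α] {n : ℕ}
    (v : Fin n → α → ℝ) (hbin : ∀ i g, v i g = 0 ∨ v i g = 1)
    (A : Fin n → Finset α)
    (hdisj : ∀ i j, i ≠ j → Disjoint (A i) (A j))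
    (hcover : Finset.univ.biUnion A = Finset.univ)
    (hEF1 : ∀ i j : Fin n, (A j).Nonempty →
      ∃ g ∈ A j, ∑ h ∈ (A j).erase g, v i h ≤ ∑ h ∈ A i, v i h) :
    ∀ (i : Fin n) (J : Finset (Fin n)), i ∈ J →
      mu (v i) J.card (J.biUnion A) ≤ ∑ g ∈ A i, v i g := by
  intro i J hiJ
  set a : ℝ := ∑ g ∈ A i, v i g with ha
  have hk : 0 < J.card := Finset.card_pos.mpr ⟨i, hiJ⟩
  haveI : Nonempty (Fin J.card) := ⟨⟨0, hk⟩⟩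
  have hcard : ∀ T : Finset α,
      ∑ g ∈ T, v i g = ((T.filter (fun g => v i g = 1)).card : ℝ) := by
    intro T
    rw [← Finset.sum_boole]
    refine Finset.sum_congr rfl fun g _ => ?_
    rcases hbin i g with h | h <;> simp [h]
  have ha_nonneg : 0 ≤ a := by
    rw [ha, hcard]; positivity
  apply ciSup_le
  intro P
  by_contra hlt
  push_neg at hlt
  -- each part has value at least a + 1
  have hparts : ∀ j : Fin J.card,
      a + 1 ≤ ∑ g ∈ (J.biUnion A).filter (fun g => P g = j), v i g := by
    intro j
    have h1 : a < ∑ g ∈ (J.biUnion A).filter (fun g => P g = j), v i g :=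
      lt_of_lt_of_le hlt (ciInf_le (Set.Finite.bddBelow (Set.finite_range _)) j)
    rw [ha, hcard, hcard] at h1 ⊢
    have h2 : ((A i).filter (fun g => v i g = 1)).card
        < (((J.biUnion A).filter (fun g => P g = j)).filter (fun g => v i g = 1)).card := by
      exact_mod_cast h1
    have h3 := Nat.succ_le_of_lt h2
    push_cast
    exact_mod_cast h3
  -- total value of the parts
  have hsumparts : ∑ j : Fin J.card, ∑ g ∈ (J.biUnion A).filter (fun g => P g = j), v i g
      = ∑ g ∈ J.biUnion A, v i g := by
    exact Finset.sum_fiberwise _ _ _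
  have hS : ∑ g ∈ J.biUnion A, v i g = ∑ j ∈ J, ∑ g ∈ A j, v i g :=
    Finset.sum_biUnion (fun x _ y _ hxy => hdisj x y hxy)
  -- EF1 bound for other agents
  have hbound : ∀ j ∈ J.erase i, ∑ g ∈ A j, v i g ≤ a + 1 := by
    intro j hj
    rcases (A j).eq_empty_or_nonempty with h | h
    · simp [h]; linarith
    · obtain ⟨g, hg, hle⟩ := hEF1 i j h
      have herase := Finset.sum_erase_add (A j) (v i) hg
      have hv1 : v i g ≤ 1 := by rcases hbin i g with h' | h' <;> simp [h']
      rw [← ha] at hle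
      linarith
  have hsplit : ∑ j ∈ J.erase i, (∑ g ∈ A j, v i g) + a = ∑ j ∈ J, ∑ g ∈ A j, v i g := by
    rw [ha]; exact Finset.sum_erase_add J _ hiJ
  have hupper : ∑ j ∈ J, ∑ g ∈ A j, v i g ≤ a + (J.card - 1 : ℕ) * (a + 1) := by
    have := Finset.sum_le_card_nsmul (J.erase i) (fun j => ∑ g ∈ A j, v i g) (a + 1) hbound
    rw [Finset.card_erase_of_mem hiJ] at this
    rw [nsmul_eq_mul] at this
    linarith
  have hlower : (J.card : ℝ) * (a + 1)
      ≤ ∑ j : Fin J.card, ∑ g ∈ (J.biUnion A).filter (fun g => P g = j), v i g := by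
    have := Finset.card_nsmul_le_sum Finset.univ
      (fun j : Fin J.card => ∑ g ∈ (J.biUnion A).filter (fun g => P g = j), v i g)
      (a + 1) (fun j _ => hparts j)
    rw [Finset.card_univ, Fintype.card_fin, nsmul_eq_mul] at this
    exact this
  have hcast : ((J.card - 1 : ℕ) : ℝ) = (J.card : ℝ) - 1 := by
    push_cast [Nat.cast_sub hk]
    ring
  rw [hsumparts, hS] at hlower
  rw [hcast] at hupper
  nlinarith [hlower, hupper]
end

section
/- If all n agents have the same (possibly non-additive, non-negative) valuation v, then a GMMS allocation exists: there is a partition (A_1,...,A_n) of the goods such that for every agent i and every subset J ∋ i, v(A_i) ≥ μ^{|J|}(∪_{j∈J} A_j), where μ^k(S) is the k-maximin share under v. -/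
open Finset

/-- `k`-maximin share for a general (possibly non-additive) valuation
`v : Finset α → ℝ` restricted to `S`. -/
noncomputable def muG {α : Type*} [Fintype α] [DecidableEq α]
    (v : Finset α → ℝ) (k : ℕ) (S : Finset α) : ℝ :=
  ⨆ P : α → Fin k, ⨅ j : Fin k, v (S.filter (fun g => P g = j))

/-!
Among all allocations take one maximising the potential `∑ⱼ -q ^ r(v(Aⱼ))`, where `r(x)` is the
number of values of `v` below `x` and `q = 1/(n+1)`; this encodes the leximin order on the sorted
value vector. If some `J ∋ i` had a `|J|`-partition of `⋃_{j ∈ J} Aⱼ` all of whose parts are worth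
more than `v(Aᵢ)`, hence more than `t = min_{j ∈ J} v(Aⱼ)`, then handing those parts to the agents
of `J` would raise the potential: the bundles of `J` contribute at most `-q ^ r(t)` before and at
least `-|J| q ^ (r(t)+1) > -q ^ r(t)` after.
-/

section RankWeight

variable {β : Type*} [LinearOrder β] (V : Finset β) (q : ℝ)

noncomputable def rankWeight (x : β) : ℝ := -q ^ #{y ∈ V | y < x}

variable {V q}

lemma rankWeight_nonpos (hq : 0 ≤ q) (x : β) : rankWeight V q x ≤ 0 :=
  neg_nonpos.mpr (pow_nonneg hq _)

lemma rankWeight_neg (hq : 0 < q) (x : β) : rankWeight V q x < 0 :=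
  neg_neg_iff_pos.mpr (pow_pos hq _)

lemma mul_rankWeight_le_of_lt (hq₀ : 0 ≤ q) (hq₁ : q ≤ 1) {t x : β} (ht : t ∈ V) (htx : t < x) :
    q * rankWeight V q t ≤ rankWeight V q x := by
  have hcard : #{y ∈ V | y < t} < #{y ∈ V | y < x} := by
    refine card_lt_card <| (ssubset_iff_of_subset ?_).mpr ⟨t, ?_, ?_⟩
    · exact monotone_filter_right V fun _ _ hy => hy.trans htx
    · exact mem_filter.mpr ⟨ht, htx⟩
    · exact fun h => lt_irrefl t (mem_filter.mp h).2
  calc q * rankWeight V q t = -q ^ (#{y ∈ V | y < t} + 1) := by rw [rankWeight, pow_succ']; ring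
    _ ≤ rankWeight V q x := neg_le_neg (pow_le_pow_of_le_one hq₀ hq₁ hcard)

lemma sum_rankWeight_lt {ι : Type*} {J : Finset ι} (hq₀ : 0 < q) (hq₁ : q ≤ 1) (hJ : #J * q < 1)
    {a b : ι → β} {i : ι} (hi : i ∈ J) (hai : a i ∈ V) (hab : ∀ j ∈ J, a i < b j) :
    ∑ j ∈ J, rankWeight V q (a j) < ∑ j ∈ J, rankWeight V q (b j) := by
  classical
  have hold : ∑ j ∈ J, rankWeight V q (a j) ≤ rankWeight V q (a i) := by
    rw [← add_sum_erase J _ hi]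
    linarith [sum_nonpos fun j (_ : j ∈ J.erase i) => rankWeight_nonpos (V := V) hq₀.le (a j)]
  have hnew : #J * (q * rankWeight V q (a i)) ≤ ∑ j ∈ J, rankWeight V q (b j) := by
    simpa using card_nsmul_le_sum J _ _
      fun j hj => mul_rankWeight_le_of_lt hq₀.le hq₁ hai (hab j hj)
  have hscale := mul_lt_mul_of_neg_right hJ (rankWeight_neg (V := V) hq₀ (a i))
  rw [one_mul, mul_assoc] at hscale
  linarith

end RankWeight

section Allocation

variable {α : Type*} [Fintype α] {n : ℕ}

def bundle (P : α → Fin n) (j : Fin n) : Finset α := univ.filter (P · = j)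

@[simp]
lemma mem_bundle {P : α → Fin n} {j : Fin n} {g : α} : g ∈ bundle P j ↔ P g = j := by
  simp [bundle]

lemma disjoint_bundle (P : α → Fin n) {i j : Fin n} (hij : i ≠ j) :
    Disjoint (bundle P i) (bundle P j) := by
  simp only [disjoint_left, mem_bundle]
  rintro g rfl rfl
  exact hij rfl

lemma biUnion_bundle [DecidableEq α] (P : α → Fin n) (J : Finset (Fin n)) :
    J.biUnion (bundle P) = univ.filter (P · ∈ J) := by
  ext g
  simp

lemma biUnion_bundle_univ [DecidableEq α] (P : α → Fin n) : univ.biUnion (bundle P) = univ := by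
  simp [biUnion_bundle]

noncomputable def reassign (P : α → Fin n) (J : Finset (Fin n)) (Q : α → Fin #J) :
    α → Fin n :=
  fun g => if P g ∈ J then J.equivFin.symm (Q g) else P g

lemma bundle_reassign_of_notMem (P : α → Fin n) {J : Finset (Fin n)} (Q : α → Fin #J)
    {j : Fin n} (hj : j ∉ J) : bundle (reassign P J Q) j = bundle P j := by
  ext g
  simp only [mem_bundle, reassign]
  split_ifs with hg
  · exact iff_of_false (fun h => hj (h ▸ (J.equivFin.symm (Q g)).2)) (fun h => hj (h ▸ hg))
  · rfl

lemma bundle_reassign_of_mem [DecidableEq α] (P : α → Fin n) {J : Finset (Fin n)}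
    (Q : α → Fin #J) {j : Fin n} (hj : j ∈ J) :
    bundle (reassign P J Q) j = (J.biUnion (bundle P)).filter (Q · = J.equivFin ⟨j, hj⟩) := by
  ext g
  simp only [biUnion_bundle, mem_bundle, reassign, mem_filter, mem_univ, true_and]
  split_ifs with hg
  · rw [← Equiv.symm_apply_eq]
    simp [hg, Subtype.ext_iff, eq_comm]
  · exact iff_of_false (fun h => hg (h ▸ hj)) (fun h => hg h.1)

variable (v : Finset α → ℝ)

lemma muG_le_of_forall_exists_le [DecidableEq α] {k : ℕ} (hk : 0 < k) {S : Finset α} {x : ℝ}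
    (h : ∀ Q : α → Fin k, ∃ j, v (S.filter (Q · = j)) ≤ x) : muG v k S ≤ x := by
  have : Nonempty (Fin k) := ⟨⟨0, hk⟩⟩
  refine ciSup_le fun Q => ?_
  obtain ⟨j, hj⟩ := h Q
  exact (ciInf_le (Set.finite_range _).bddBelow j).trans hj

noncomputable def potential (P : α → Fin n) : ℝ :=
  ∑ j, rankWeight (univ.image v) ((n : ℝ) + 1)⁻¹ (v (bundle P j))

lemma potential_lt_reassign [DecidableEq α] {P : α → Fin n} {J : Finset (Fin n)}
    {Q : α → Fin #J} {i : Fin n} (hi : i ∈ J)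
    (h : ∀ k, v (bundle P i) < v ((J.biUnion (bundle P)).filter (Q · = k))) :
    potential v P < potential v (reassign P J Q) := by
  obtain ⟨i₀, hi₀, hmin⟩ := exists_min_image J (fun j => v (bundle P j)) ⟨i, hi⟩
  have hq₀ : (0 : ℝ) < ((n : ℝ) + 1)⁻¹ := by positivity
  have hq₁ : ((n : ℝ) + 1)⁻¹ ≤ 1 := inv_le_one_of_one_le₀ (by simp)
  have hJ : #J * ((n : ℝ) + 1)⁻¹ < 1 := by
    rw [← div_eq_mul_inv, div_lt_one (by positivity)]
    exact_mod_cast Nat.lt_succ_of_le (card_le_univ J |>.trans (Fintype.card_fin n).le)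
  have hinside := sum_rankWeight_lt hq₀ hq₁ hJ hi₀ (mem_image_of_mem v (mem_univ _))
    (a := fun j => v (bundle P j))
    (b := fun j => v (bundle (reassign P J Q) j)) fun j hj => by
      rw [bundle_reassign_of_mem P Q hj]
      exact (hmin i hi).trans_lt (h _)
  have houtside : ∑ j ∈ Jᶜ, rankWeight (univ.image v) ((n : ℝ) + 1)⁻¹ (v (bundle P j)) =
      ∑ j ∈ Jᶜ, rankWeight (univ.image v) ((n : ℝ) + 1)⁻¹ (v (bundle (reassign P J Q) j)) :=
    sum_congr rfl fun j hj => by rw [bundle_reassign_of_notMem P Q (mem_compl.mp hj)]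
  rw [potential, potential, ← sum_compl_add_sum J, ← sum_compl_add_sum J, houtside]
  exact add_lt_add_right hinside _

end Allocation

theorem gmms_exists_identical_general {α : Type*} [Fintype α] [DecidableEq α] {n : ℕ}
    (hn : 0 < n) (v : Finset α → ℝ) :
    ∃ A : Fin n → Finset α,
      (∀ i j, i ≠ j → Disjoint (A i) (A j)) ∧
      Finset.univ.biUnion A = Finset.univ ∧
      ∀ (i : Fin n) (J : Finset (Fin n)), i ∈ J →
        muG v J.card (J.biUnion A) ≤ v (A i) := by
  have : Nonempty (Fin n) := ⟨⟨0, hn⟩⟩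
  obtain ⟨P, hP⟩ := Finite.exists_max (potential v : (α → Fin n) → ℝ)
  refine ⟨bundle P, fun i j => disjoint_bundle P, biUnion_bundle_univ P, fun i J hi => ?_⟩
  refine muG_le_of_forall_exists_le v (card_pos.mpr ⟨i, hi⟩) fun Q => ?_
  by_contra! h
  exact (hP (reassign P J Q)).not_gt (potential_lt_reassign v hi h)

/-- If all `n` agents have the same non-negative valuation, a GMMS allocation
exists. -/
theorem gmms_exists_identical {α : Type*} [Fintype α] [DecidableEq α] {n : ℕ}
    (hn : 0 < n) (v : Finset α → ℝ) (hv : ∀ S, 0 ≤ v S) :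
    ∃ A : Fin n → Finset α,
      (∀ i j, i ≠ j → Disjoint (A i) (A j)) ∧
      Finset.univ.biUnion A = Finset.univ ∧
      ∀ (i : Fin n) (J : Finset (Fin n)), i ∈ J →
        muG v J.card (J.biUnion A) ≤ v (A i) :=
  gmms_exists_identical_general hn v
end

section
/- With identical valuations, the lexicographically maximal allocation (with respect to the sorted vector of bundle values) has the property that for every subset J of agents, no |J|-repartition of ∪_{j∈J} A_j has minimum bundle value strictly greater than min_{j∈J} v(A_j). -/
/-!
If some `|J|`-repartition `Q` of the bundles of `J` had every value above
`m = min_{j ∈ J} v(A_j)`, replace the bundles of `J` by those of `Q`. The resulting allocation has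
the same values as `A` below `m` and strictly fewer values equal to `m`, so its ascending value
vector is lexicographically larger, contradicting the maximality of `A`.
-/

open Finset

/-- The ascending sorted vector of bundle values of an allocation. -/
noncomputable def sortedVals {α : Type*} [Fintype α] {n : ℕ}
    (v : Finset α → ℝ) (A : Fin n → Finset α) : List ℝ :=
  Multiset.sort (Multiset.map (fun i => v (A i)) (Finset.univ : Finset (Fin n)).val) (· ≤ ·)

theorem List.lex_lt_of_filter_lt_perm_of_count_lt {α : Type*} [LinearOrder α] (m : α) :
    ∀ {l₁ l₂ : List α}, l₁.Pairwise (· ≤ ·) → l₂.Pairwise (· ≤ ·) → l₁.length = l₂.length →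
      (l₁.filter (· < m)).Perm (l₂.filter (· < m)) → l₂.count m < l₁.count m →
      List.Lex (· < ·) l₁ l₂
  | [], _, _, _, _, _, hcount => by simp at hcount
  | _ :: _, [], _, _, hlen, _, _ => by simp at hlen
  | a :: l₁, b :: l₂, hs₁, hs₂, hlen, hperm, hcount => by
    rcases lt_trichotomy a b with hab | rfl | hba
    · exact .rel hab
    · refine .cons (lex_lt_of_filter_lt_perm_of_count_lt m hs₁.of_cons hs₂.of_cons
        (by simpa using hlen) ?_ (by simp only [List.count_cons] at hcount; omega))
      by_cases ham : a < m
      · simpa [List.filter_cons, ham] using hperm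
      · simpa [List.filter_cons, ham] using hperm
    · -- `b < a` is impossible: below `m` the two lists agree, and `l₁` contains `m`.
      exfalso
      have ha_le : ∀ x ∈ a :: l₁, a ≤ x := by
        simpa using fun x hx => List.rel_of_pairwise_cons hs₁ hx
      by_cases hbm : b < m
      · have hb : b ∈ a :: l₁ := List.mem_of_mem_filter <| hperm.mem_iff.mpr (by simp [hbm])
        exact (ha_le b hb).not_gt hba
      · have hm : m ∈ a :: l₁ := List.count_pos_iff.mp (by omega)
        exact (ha_le m hm).not_gt ((not_lt.mp hbm).trans_lt hba)

theorem Multiset.lex_sort_lt_of_filter_lt_eq_of_count_lt {α : Type*} [LinearOrder α]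
    {s t : Multiset α} {m : α} (hcard : s.card = t.card)
    (hfilter : s.filter (· < m) = t.filter (· < m)) (hcount : t.count m < s.count m) :
    List.Lex (· < ·) (s.sort (· ≤ ·)) (t.sort (· ≤ ·)) := by
  refine List.lex_lt_of_filter_lt_perm_of_count_lt m (Multiset.pairwise_sort _ _)
    (Multiset.pairwise_sort _ _) (by simpa using hcard) ?_ ?_
  · rw [← Multiset.coe_eq_coe, ← Multiset.filter_coe, ← Multiset.filter_coe, Multiset.sort_eq,
      Multiset.sort_eq, hfilter]
  · rwa [← Multiset.coe_count, ← Multiset.coe_count, Multiset.sort_eq, Multiset.sort_eq]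

theorem sortedVals_lex_lt_of_inf'_lt {α : Type*} [Fintype α] {n : ℕ} (v : Finset α → ℝ)
    {A B : Fin n → Finset α} {J : Finset (Fin n)} (hJ : J.Nonempty)
    (hout : ∀ i ∉ J, B i = A i) (hin : ∀ i ∈ J, J.inf' hJ (fun j => v (A j)) < v (B i)) :
    List.Lex (· < ·) (sortedVals v A) (sortedVals v B) := by
  set m := J.inf' hJ (fun j => v (A j))
  have hbelow : ∀ i, v (A i) < m ∨ v (B i) < m → B i = A i := by
    refine fun i h => hout i fun hi => ?_
    rcases h with h | h
    · exact (J.inf'_le (fun j => v (A j)) hi).not_gt h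
    · exact (hin i hi).not_gt h
  have hat : ∀ i, m = v (B i) → B i = A i :=
    fun i h => hout i fun hi => (hin i hi).ne h
  refine Multiset.lex_sort_lt_of_filter_lt_eq_of_count_lt (m := m) (by simp) ?_ ?_
  · have hsupp : univ.val.filter (fun i => v (A i) < m) = univ.val.filter (fun i => v (B i) < m) :=
      Multiset.filter_congr fun i _ =>
        ⟨fun h => by rwa [hbelow i (.inl h)], fun h => by rwa [← hbelow i (.inr h)]⟩
    rw [Multiset.filter_map, Multiset.filter_map]
    simp only [Function.comp_def]
    rw [hsupp]
    exact Multiset.map_congr rfl fun i hi => by rw [hbelow i (.inr (Multiset.mem_filter.mp hi).2)]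
  · simp only [Multiset.count_map, ← filter_val, card_val]
    obtain ⟨j, hj, hjm⟩ := J.exists_mem_eq_inf' hJ (fun j => v (A j))
    refine card_lt_card <| (ssubset_iff_of_subset fun i hi => ?_).mpr ⟨j, ?_, ?_⟩
    · simp only [mem_filter] at hi ⊢
      exact ⟨hi.1, by rw [← hat i hi.2]; exact hi.2⟩
    · simpa using hjm
    · simpa [← hjm] using (hin j hj).ne

open Function

section replaceBundles

variable {ι α : Type*} [DecidableEq ι] (A : ι → Finset α) (J : Finset ι) (Q : Fin J.card → Finset α)

noncomputable def replaceBundles : ι → Finset α :=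
  fun i => if h : i ∈ J then Q (J.equivFin ⟨i, h⟩) else A i

variable {A J Q}

theorem replaceBundles_of_mem {i : ι} (hi : i ∈ J) :
    replaceBundles A J Q i = Q (J.equivFin ⟨i, hi⟩) :=
  dif_pos hi

theorem replaceBundles_of_notMem {i : ι} (hi : i ∉ J) : replaceBundles A J Q i = A i :=
  dif_neg hi

theorem pairwise_disjoint_replaceBundles [DecidableEq α] (hA : Pairwise (Disjoint on A))
    (hQ : Pairwise (Disjoint on Q)) (hQA : ∀ k, Q k ⊆ J.biUnion A) :
    Pairwise (Disjoint on replaceBundles A J Q) := by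
  have houtside : ∀ k, ∀ i ∉ J, Disjoint (Q k) (A i) := fun k i hi =>
    disjoint_of_subset_left (hQA k) <| (disjoint_biUnion_left _ _ _).mpr fun j hj =>
      hA fun hji => hi (hji ▸ hj)
  intro i j hij
  by_cases hi : i ∈ J <;> by_cases hj : j ∈ J <;>
    simp only [onFun, replaceBundles_of_mem, replaceBundles_of_notMem, hi, hj,
      not_false_eq_true]
  · exact hQ fun h => hij (Subtype.ext_iff.mp (J.equivFin.injective h))
  · exact houtside _ j hj
  · exact (houtside _ i hi).symm
  · exact hA hij

theorem biUnion_replaceBundles_eq_univ [Fintype ι] [Fintype α] [DecidableEq α]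
    (hA : univ.biUnion A = univ) (hQ : J.biUnion A ⊆ univ.biUnion Q) :
    univ.biUnion (replaceBundles A J Q) = univ := by
  refine eq_univ_of_forall fun g => ?_
  obtain ⟨i, -, hgi⟩ := mem_biUnion.mp (hA.symm ▸ mem_univ g : g ∈ univ.biUnion A)
  by_cases hi : i ∈ J
  · obtain ⟨k, -, hgk⟩ := mem_biUnion.mp (hQ (mem_biUnion.mpr ⟨i, hi, hgi⟩))
    refine mem_biUnion.mpr ⟨J.equivFin.symm k, mem_univ _, ?_⟩
    rwa [replaceBundles_of_mem (J.equivFin.symm k).2, Subtype.coe_eta, Equiv.apply_symm_apply]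
  · exact mem_biUnion.mpr ⟨i, mem_univ _, by rwa [replaceBundles_of_notMem hi]⟩

end replaceBundles

theorem lex_maximal_no_better_repartition_general {α : Type*} [Fintype α] [DecidableEq α]
    {n : ℕ} (v : Finset α → ℝ)
    (A : Fin n → Finset α)
    (hdisj : ∀ i j, i ≠ j → Disjoint (A i) (A j))
    (hcover : Finset.univ.biUnion A = Finset.univ)
    (hmax : ∀ B : Fin n → Finset α,
      (∀ i j, i ≠ j → Disjoint (B i) (B j)) →
      Finset.univ.biUnion B = Finset.univ →
      List.Lex (· < ·) (sortedVals v B) (sortedVals v A) ∨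
        sortedVals v B = sortedVals v A) :
    ∀ (J : Finset (Fin n)) (hJ : J.Nonempty) (P : α → Fin J.card),
      (⨅ j : Fin J.card, v ((J.biUnion A).filter (fun g => P g = j))) ≤
        J.inf' hJ (fun j => v (A j)) := by
  intro J hJ P
  by_contra! hbetter
  set Q : Fin J.card → Finset α := fun k => (J.biUnion A).filter (fun g => P g = k)
  set B := replaceBundles A J Q with hB
  have hQ_disj : Pairwise (Disjoint on Q) := fun k l hkl =>
    disjoint_filter.mpr fun _ _ hk hl => hkl (hk ▸ hl)
  have hB_disj : Pairwise (Disjoint on B) :=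
    pairwise_disjoint_replaceBundles (fun _ _ => hdisj _ _) hQ_disj fun k => filter_subset _ _
  have hB_cover : univ.biUnion B = univ := biUnion_replaceBundles_eq_univ hcover fun g hg =>
    mem_biUnion.mpr ⟨P g, mem_univ _, show g ∈ Q (P g) from mem_filter.mpr ⟨hg, rfl⟩⟩
  have hB_le : sortedVals v B ≤ sortedVals v A :=
    le_iff_lt_or_eq.mpr (hmax B (fun _ _ => @hB_disj _ _) hB_cover)
  have hA_lt : sortedVals v A < sortedVals v B :=
    sortedVals_lex_lt_of_inf'_lt v hJ (fun _ hi => replaceBundles_of_notMem hi) fun i hi => by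
      rw [hB, replaceBundles_of_mem hi]
      exact hbetter.trans_le (ciInf_le (Finite.bddBelow_range _) _)
  exact hA_lt.not_ge hB_le

/-- With identical valuations, a lexicographically maximal allocation (w.r.t.
the ascending sorted vector of bundle values) is such that, for every group
`J` of agents, no `|J|`-repartition of `∪_{j∈J} A_j` has minimum bundle value
strictly greater than `min_{j∈J} v(A_j)`. -/
theorem lex_maximal_no_better_repartition {α : Type*} [Fintype α] [DecidableEq α]
    {n : ℕ} (v : Finset α → ℝ) (hv : ∀ S, 0 ≤ v S)
    (A : Fin n → Finset α)
    (hdisj : ∀ i j, i ≠ j → Disjoint (A i) (A j))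
    (hcover : Finset.univ.biUnion A = Finset.univ)
    (hmax : ∀ B : Fin n → Finset α,
      (∀ i j, i ≠ j → Disjoint (B i) (B j)) →
      Finset.univ.biUnion B = Finset.univ →
      List.Lex (· < ·) (sortedVals v B) (sortedVals v A) ∨
        sortedVals v B = sortedVals v A) :
    ∀ (J : Finset (Fin n)) (hJ : J.Nonempty) (P : α → Fin J.card),
      (⨅ j : Fin J.card, v ((J.biUnion A).filter (fun g => P g = j))) ≤
        J.inf' hJ (fun j => v (A j)) :=
  lex_maximal_no_better_repartition_general v A hdisj hcover hmax
end

section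
/- Given a partial allocation whose envy graph contains a directed cycle, reallocating bundles along the cycle (each agent in the cycle receives its successor's bundle) yields a partial allocation in which every agent's value for her own bundle weakly increases and the number of edges in the envy graph strictly decreases. -/
open Finset

/-- The set of envy edges of a (partial) allocation: `(i, j)` with `i`
envying `j`. -/
def envyEdges {α : Type*} {n : ℕ} (v : Fin n → Finset α → ℝ)
    (A : Fin n → Finset α) : Set (Fin n × Fin n) :=
  {p : Fin n × Fin n | v p.1 (A p.1) < v p.1 (A p.2)}

/-- Resolving an envy cycle: rotating bundles along a directed cycle of the
envy graph weakly increases every agent's value for her own bundle and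
strictly decreases the number of envy edges. -/
theorem envy_cycle_resolution {α : Type*} {n : ℕ} (v : Fin n → Finset α → ℝ)
    (A B : Fin n → Finset α)
    (hdisj : ∀ i j, i ≠ j → Disjoint (A i) (A j))
    {k : ℕ} (c : Fin (k + 1) → Fin n) (hinj : Function.Injective c)
    (hcycle : ∀ a : Fin (k + 1), v (c a) (A (c a)) < v (c a) (A (c (a + 1))))
    (hBc : ∀ a : Fin (k + 1), B (c a) = A (c (a + 1)))
    (hBother : ∀ j : Fin n, (∀ a, c a ≠ j) → B j = A j) :
    (∀ i : Fin n, v i (A i) ≤ v i (B i)) ∧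
    (envyEdges v B).ncard < (envyEdges v A).ncard := by
  classical
  set σ : Equiv.Perm (Fin n) :=
    (Equiv.addRight (1 : Fin (k + 1))).viaEmbedding ⟨c, hinj⟩ with hσ
  have hσc : ∀ a, σ (c a) = c (a + 1) := by
    intro a
    have := (Equiv.addRight (1 : Fin (k + 1))).viaEmbedding_apply ⟨c, hinj⟩ a
    simpa [hσ] using this
  have hσo : ∀ j, (∀ a, c a ≠ j) → σ j = j := by
    intro j hj
    apply Equiv.Perm.viaEmbedding_apply_of_notMem
    rintro ⟨a, ha⟩; exact hj a ha
  have hB : ∀ j, B j = A (σ j) := by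
    intro j
    by_cases h : ∃ a, c a = j
    · obtain ⟨a, rfl⟩ := h; rw [hσc, hBc]
    · push_neg at h; rw [hσo j h, hBother j h]
  have hmono : ∀ i, v i (A i) ≤ v i (A (σ i)) := by
    intro i
    by_cases h : ∃ a, c a = i
    · obtain ⟨a, rfl⟩ := h; rw [hσc]; exact (hcycle a).le
    · push_neg at h; rw [hσo i h]
  refine ⟨fun i => by rw [hB]; exact hmono i, ?_⟩
  have hfinA : (envyEdges v A).Finite := Set.toFinite _
  have hss : (fun p : Fin n × Fin n => (p.1, σ p.2)) '' (envyEdges v B)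
      ⊂ envyEdges v A := by
    constructor
    · rintro ⟨i, j'⟩ ⟨⟨i0, j⟩, hp, heq⟩
      simp only [Prod.mk.injEq] at heq
      obtain ⟨rfl, rfl⟩ := heq
      have hp' : v i0 (A (σ i0)) < v i0 (A (σ j)) := by
        simpa [envyEdges, hB] using hp
      exact lt_of_le_of_lt (hmono i0) hp'
    · intro hsub
      have hmem : (c 0, c (0 + 1)) ∈ envyEdges v A := hcycle 0
      obtain ⟨⟨i, j⟩, hp, heq⟩ := hsub hmem
      simp only [Prod.mk.injEq] at heq
      obtain ⟨rfl, h2⟩ := heq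
      have hj : j = c 0 := by
        apply σ.injective
        rw [h2, hσc]
      subst hj
      simp only [envyEdges, Set.mem_setOf_eq] at hp
      exact lt_irrefl _ hp
  have hinjf : Function.Injective (fun p : Fin n × Fin n => (p.1, σ p.2)) := by
    rintro ⟨a, b⟩ ⟨a', b'⟩ h
    simp only [Prod.mk.injEq] at h
    exact Prod.ext h.1 (σ.injective h.2)
  calc (envyEdges v B).ncard
      = ((fun p : Fin n × Fin n => (p.1, σ p.2)) '' (envyEdges v B)).ncard :=
        (Set.ncard_image_of_injective _ hinjf).symm
    _ < (envyEdges v A).ncard := Set.ncard_lt_ncard hss hfinA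
end

section
/- Repeatedly resolving envy cycles terminates in a partial allocation with an acyclic envy graph, in which each agent's value for her bundle is at least her value in the original partial allocation. -/
open Finset

/-- Any closed walk in a digraph on `Fin n` can be shortened to an injective
closed walk; hence if no injective closed walk exists, no closed walk exists. -/
lemma walk_to_cycle {n : ℕ} (E : Fin n → Fin n → Prop)
    (hinj : ∀ (k : ℕ) (c : Fin (k + 1) → Fin n), Function.Injective c →
      (∀ a, E (c a) (c (a + 1))) → False) :
    ∀ (k : ℕ) (c : Fin (k + 1) → Fin n), ¬ (∀ a, E (c a) (c (a + 1))) := by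
  intro k
  induction k using Nat.strong_induction_on with
  | _ k ih =>
    intro c hc
    by_cases hcinj : Function.Injective c
    · exact hinj k c hcinj hc
    · obtain ⟨a, b, hab, hlt⟩ : ∃ a b : Fin (k + 1), c a = c b ∧ a.val < b.val := by
        simp only [Function.Injective] at hcinj
        push_neg at hcinj
        obtain ⟨a, b, h1, h2⟩ := hcinj
        rcases lt_or_gt_of_ne (fun h : a.val = b.val => h2 (Fin.ext h)) with h | h
        · exact ⟨a, b, h1, h⟩
        · exact ⟨b, a, h1.symm, h⟩
      have hbk : b.val < k + 1 := b.isLt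
      obtain ⟨m, hb, hm⟩ : ∃ m : ℕ, b.val = a.val + m + 1 ∧ m < k := by
        exact ⟨b.val - a.val - 1, by omega, by omega⟩
      have hval : ∀ (i : Fin (k + 1)), i.val < k → (i + 1).val = i.val + 1 := by
        intro i hi
        exact Fin.val_add_one_of_lt (by rw [Fin.lt_def, Fin.val_last]; exact hi)
      have hbound : ∀ (j : Fin (m + 1)), a.val + j.val < k + 1 := by
        intro j
        have := j.isLt
        omega
      refine ih m hm (fun j => c ⟨a.val + j.val, hbound j⟩) ?_
      intro j
      have key := hc ⟨a.val + j.val, hbound j⟩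
      have hjlt := j.isLt
      by_cases hj : j.val < m
      · have h1 : ((j + 1 : Fin (m + 1))).val = j.val + 1 :=
          Fin.val_add_one_of_lt (by rw [Fin.lt_def, Fin.val_last]; exact hj)
        have h4 : c ((⟨a.val + j.val, hbound j⟩ : Fin (k + 1)) + 1)
            = c ⟨a.val + (j + 1 : Fin (m + 1)).val, hbound (j + 1)⟩ := by
          refine congrArg c (Fin.ext ?_)
          rw [hval ⟨a.val + j.val, hbound j⟩ (by rw [Fin.val_mk]; omega)]
          simp only [Fin.val_mk]
          omega
        rw [h4] at key
        exact key
      · -- j = last: wrap around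
        have hjm : j.val = m := by omega
        have h1 : ((j + 1 : Fin (m + 1))).val = 0 := by
          have : j = Fin.last m := Fin.ext (by rw [Fin.val_last]; exact hjm)
          rw [this, Fin.last_add_one, Fin.val_zero]
        have h4 : c ((⟨a.val + j.val, hbound j⟩ : Fin (k + 1)) + 1)
            = c ⟨a.val + (j + 1 : Fin (m + 1)).val, hbound (j + 1)⟩ := by
          have e1 : ((⟨a.val + j.val, hbound j⟩ : Fin (k + 1)) + 1) = b := by
            refine Fin.ext ?_
            rw [hval ⟨a.val + j.val, hbound j⟩ (by rw [Fin.val_mk]; omega), Fin.val_mk]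
            omega
          have e2 : (⟨a.val + (j + 1 : Fin (m + 1)).val, hbound (j + 1)⟩ : Fin (k + 1))
              = a := by
            refine Fin.ext ?_
            simp only [Fin.val_mk]
            omega
          rw [e1, e2, hab]
        rw [h4] at key
        exact key

/-- Repeatedly resolving envy cycles terminates in a partial allocation
(a permutation of the original bundles) whose envy graph is acyclic, in which
each agent's value for her bundle is at least her original value. -/
theorem envy_cycle_elimination {α : Type*} {n : ℕ} (v : Fin n → Finset α → ℝ)
    (A : Fin n → Finset α)
    (hdisj : ∀ i j, i ≠ j → Disjoint (A i) (A j)) :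
    ∃ π : Equiv.Perm (Fin n),
      (∀ i : Fin n, v i (A i) ≤ v i (A (π i))) ∧
      ∀ (k : ℕ) (c : Fin (k + 1) → Fin n),
        ¬ (∀ a : Fin (k + 1), v (c a) (A (π (c a))) < v (c a) (A (π (c (a + 1))))) := by
  classical
  obtain ⟨π, hπmem, hπmax⟩ :=
    Finset.exists_max_image
      (Finset.univ.filter fun π : Equiv.Perm (Fin n) =>
        ∀ i, v i (A i) ≤ v i (A (π i)))
      (fun π => ∑ i, v i (A (π i)))
      ⟨1, by simp⟩
  have hπS : ∀ i, v i (A i) ≤ v i (A (π i)) := (Finset.mem_filter.mp hπmem).2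
  refine ⟨π, hπS, ?_⟩
  refine walk_to_cycle (fun i j => v i (A (π i)) < v i (A (π j))) ?_
  intro k c hcinj hc
  -- build the rotation permutation σ
  let f : Fin (k + 1) ≃ {x // x ∈ Set.range c} := Equiv.ofInjective c hcinj
  let σ : Equiv.Perm (Fin n) := (finRotate (k + 1)).extendDomain f
  have hσ_mem : ∀ a : Fin (k + 1), σ (c a) = c (a + 1) := by
    intro a
    have : σ (f a) = f (finRotate (k + 1) a) :=
      Equiv.Perm.extendDomain_apply_image (finRotate (k + 1)) f a
    simpa [f, finRotate_succ_apply, Equiv.ofInjective] using this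
  have hσ_not : ∀ x : Fin n, x ∉ Set.range c → σ x = x := by
    intro x hx
    exact Equiv.Perm.extendDomain_apply_not_subtype (finRotate (k + 1)) f hx
  set π' : Equiv.Perm (Fin n) := π * σ with hπ'
  have hle : ∀ i : Fin n, v i (A (π i)) ≤ v i (A (π' i)) := by
    intro i
    by_cases hi : i ∈ Set.range c
    · obtain ⟨a, rfl⟩ := hi
      have : π' (c a) = π (c (a + 1)) := by
        rw [hπ', Equiv.Perm.mul_apply, hσ_mem]
      rw [this]
      exact (hc a).le
    · have : π' i = π i := by rw [hπ', Equiv.Perm.mul_apply, hσ_not i hi]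
      rw [this]
  have hπ'mem : π' ∈ Finset.univ.filter fun π : Equiv.Perm (Fin n) =>
      ∀ i, v i (A i) ≤ v i (A (π i)) := by
    refine Finset.mem_filter.mpr ⟨Finset.mem_univ _, fun i => ?_⟩
    exact le_trans (hπS i) (hle i)
  have hlt : (∑ i, v i (A (π i))) < ∑ i, v i (A (π' i)) := by
    apply Finset.sum_lt_sum (fun i _ => hle i)
    refine ⟨c 0, Finset.mem_univ _, ?_⟩
    have : π' (c 0) = π (c (0 + 1)) := by
      rw [hπ', Equiv.Perm.mul_apply, hσ_mem]
    rw [this]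
    exact hc 0
  exact absurd (hπmax π' hπ'mem) (not_le.mpr hlt)
end

section
/- In the instance of the previous context, for any subset J of agents of size t ≤ k/2 containing agents 1 and k under the allocation A_1 = {l_1}, A_j = {l_j, d_j} for 2 ≤ j ≤ k−1, A_k = all small goods, the restricted maximin share satisfies μ_1^t(∪_{j∈J} A_j) ≤ 3k − 8 < 3k − 7 = v_1(A_1), via the averaging bound ((3k−7)(t−1) + 3(t−2) + (k−1))/t ≤ 3k − 8 for 2 ≤ t ≤ k/2. -/
/-! Splitting `S` into `t` parts, some part is worth at most the average `v(S)/t`, so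
`μ^t(S) ≤ v(S)/t`. Here `v(S) = (3k-7)(t-1) + 3(t-2) + (k-1) = 3kt - 2k - 4t`, which is at most
`(3k-8)t` exactly when `2t ≤ k`. -/

open Finset

theorem mu_le_sum_div {α : Type*} [Fintype α] [DecidableEq α] (v : α → ℝ) {k : ℕ} (hk : 0 < k)
    (S : Finset α) : mu v k S ≤ (∑ g ∈ S, v g) / k := by
  have : Nonempty (Fin k) := ⟨⟨0, hk⟩⟩
  refine ciSup_le fun P => ?_
  obtain ⟨j, -, hj⟩ := exists_sum_fiber_le_of_maps_to_of_sum_le_nsmul (f := P) (w := v)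
    (b := (∑ g ∈ S, v g) / k) (fun g _ => mem_univ (P g)) univ_nonempty
    (by rw [card_univ, Fintype.card_fin, nsmul_eq_mul, mul_div_cancel₀ _ (by positivity)])
  exact (ciInf_le (Finite.bddBelow_range _) j).trans hj

theorem sum_image_inl_union_image_inr {α β γ : Type*} [DecidableEq α] [DecidableEq β]
    [DecidableEq γ] (v : α ⊕ β ⊕ γ → ℝ) (A : Finset α) (B : Finset β) (C : Finset γ) :
    ∑ g ∈ A.image Sum.inl ∪ B.image (fun x => Sum.inr (Sum.inl x)) ∪
        C.image (fun x => Sum.inr (Sum.inr x)), v g =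
      ∑ a ∈ A, v (Sum.inl a) + ∑ b ∈ B, v (Sum.inr (Sum.inl b)) +
        ∑ c ∈ C, v (Sum.inr (Sum.inr c)) := by
  have hdisj : A.image Sum.inl ∪ B.image (fun x => Sum.inr (Sum.inl x)) ∪
      C.image (fun x => Sum.inr (Sum.inr x)) = A.disjSum (B.disjSum C) := by
    ext (a | b | c) <;> simp
  rw [hdisj, sum_disjSum, sum_disjSum, add_assoc]

theorem average_value_le (k t : ℝ) (ht : 0 < t) (htk : 2 * t ≤ k) :
    ((3 * k - 7) * (t - 1) + 3 * (t - 2) + (k - 1)) / t ≤ 3 * k - 8 := by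
  rw [div_le_iff₀ ht]
  linarith

theorem subgroup_mu_bound_general (k t : ℕ) (ht2 : 2 ≤ t) (htk : 2 * t ≤ k)
    (v : Fin (k - 1) ⊕ (Fin (k - 2) ⊕ Fin (k - 1)) → ℝ)
    (hvL : ∀ x : Fin (k - 1), v (Sum.inl x) = 3 * (k : ℝ) - 7)
    (hvM : ∀ x : Fin (k - 2), v (Sum.inr (Sum.inl x)) = 3)
    (hvS : ∀ x : Fin (k - 1), v (Sum.inr (Sum.inr x)) = 1)
    (L : Finset (Fin (k - 1))) (hL : L.card = t - 1)
    (D : Finset (Fin (k - 2))) (hD : D.card = t - 2)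
    (S : Finset (Fin (k - 1) ⊕ (Fin (k - 2) ⊕ Fin (k - 1))))
    (hS : S = L.image Sum.inl ∪ D.image (fun x => Sum.inr (Sum.inl x)) ∪
      Finset.univ.image (fun x : Fin (k - 1) => Sum.inr (Sum.inr x))) :
    ((3 * (k : ℝ) - 7) * ((t : ℝ) - 1) + 3 * ((t : ℝ) - 2) + ((k : ℝ) - 1)) / t ≤
        3 * (k : ℝ) - 8 ∧
    mu v t S ≤ 3 * (k : ℝ) - 8 ∧
    3 * (k : ℝ) - 8 < 3 * (k : ℝ) - 7 ∧
    (∀ x : Fin (k - 1), ∑ g ∈ ({Sum.inl x} : Finset _), v g = 3 * (k : ℝ) - 7) := by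
  have havg := average_value_le k t (by positivity) (by exact_mod_cast htk)
  have htotal : ∑ g ∈ S, v g =
      (3 * (k : ℝ) - 7) * ((t : ℝ) - 1) + 3 * ((t : ℝ) - 2) + ((k : ℝ) - 1) := by
    rw [hS, sum_image_inl_union_image_inr]
    simp only [hvL, hvM, hvS, sum_const, nsmul_eq_mul, mul_one, hL, hD, card_univ,
      Fintype.card_fin]
    push_cast [show 1 ≤ t by omega, ht2, show 1 ≤ k by omega]
    ring
  refine ⟨havg, ?_, by linarith, fun x => by simp [hvL]⟩
  calc mu v t S ≤ (∑ g ∈ S, v g) / t := mu_le_sum_div v (by omega) S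
    _ ≤ 3 * (k : ℝ) - 8 := htotal ▸ havg

/-- For a subgroup of size `t ≤ k/2` whose bundles together contain `t−1`
large goods (value `3k−7`), `t−2` medium goods (value `3`), and all `k−1`
small goods (value `1`), the restricted maximin share of agent 1 satisfies
`μ_1^t(S) ≤ 3k−8 < 3k−7 = v_1(A_1)`, via the averaging bound. -/
theorem subgroup_mu_bound (k t : ℕ) (hk : 4 ≤ k) (ht2 : 2 ≤ t) (htk : 2 * t ≤ k)
    (v : Fin (k - 1) ⊕ (Fin (k - 2) ⊕ Fin (k - 1)) → ℝ)
    (hvL : ∀ x : Fin (k - 1), v (Sum.inl x) = 3 * (k : ℝ) - 7)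
    (hvM : ∀ x : Fin (k - 2), v (Sum.inr (Sum.inl x)) = 3)
    (hvS : ∀ x : Fin (k - 1), v (Sum.inr (Sum.inr x)) = 1)
    (L : Finset (Fin (k - 1))) (hL : L.card = t - 1)
    (D : Finset (Fin (k - 2))) (hD : D.card = t - 2)
    (S : Finset (Fin (k - 1) ⊕ (Fin (k - 2) ⊕ Fin (k - 1))))
    (hS : S = L.image Sum.inl ∪ D.image (fun x => Sum.inr (Sum.inl x)) ∪
      Finset.univ.image (fun x : Fin (k - 1) => Sum.inr (Sum.inr x))) :
    ((3 * (k : ℝ) - 7) * ((t : ℝ) - 1) + 3 * ((t : ℝ) - 2) + ((k : ℝ) - 1)) / t ≤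
        3 * (k : ℝ) - 8 ∧
    mu v t S ≤ 3 * (k : ℝ) - 8 ∧
    3 * (k : ℝ) - 8 < 3 * (k : ℝ) - 7 ∧
    (∀ x : Fin (k - 1), ∑ g ∈ ({Sum.inl x} : Finset _), v g = 3 * (k : ℝ) - 7) :=
  subgroup_mu_bound_general k t ht2 htk v hvL hvM hvS L hL D hD S hS
end

section
/- Under additive valuations, if an allocation is PMMS then it is EFX: if v_i(A_i) ≥ μ_i^2(A_i ∪ A_j) for all pairs i, j, then for every pair i, j and every good g ∈ A_j with v_i(g) > 0, we have v_i(A_i) ≥ v_i(A_j \ {g}). -/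
open Finset

/-- Under additive valuations, every PMMS allocation is EFX. -/
theorem pmms_implies_efx {α : Type*} [Fintype α] [DecidableEq α] {n : ℕ}
    (v : Fin n → α → ℝ) (hv : ∀ i g, 0 ≤ v i g)
    (A : Fin n → Finset α)
    (hdisj : ∀ i j, i ≠ j → Disjoint (A i) (A j))
    (hPMMS : ∀ i j : Fin n, i ≠ j →
      mu (v i) 2 (A i ∪ A j) ≤ ∑ g ∈ A i, v i g) :
    ∀ i j : Fin n, i ≠ j → ∀ g ∈ A j, 0 < v i g →
      ∑ h ∈ (A j).erase g, v i h ≤ ∑ h ∈ A i, v i h := by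
  intro i j hij g hg hvg
  by_contra hlt
  push_neg at hlt
  set S := A i ∪ A j with hS
  classical
  set P : α → Fin 2 := fun x => if x ∈ insert g (A i) then 0 else 1 with hP
  have hgAi : g ∉ A i := fun h => disjoint_left.mp (hdisj i j hij) h hg
  have hf0 : S.filter (fun x => P x = 0) = insert g (A i) := by
    ext x
    simp only [mem_filter, hP]
    constructor
    · rintro ⟨-, hx⟩
      by_contra hxn
      simp [hxn] at hx
    · intro hx
      refine ⟨?_, by simp [hx]⟩
      rcases mem_insert.mp hx with rfl | hx'
      · exact mem_union_right _ hg
      · exact mem_union_left _ hx'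
  have hf1 : S.filter (fun x => P x = 1) = (A j).erase g := by
    ext x
    simp only [mem_filter, hP, mem_erase]
    constructor
    · rintro ⟨hxS, hx⟩
      by_cases hxi : x ∈ insert g (A i)
      · simp [hxi] at hx
      · simp only [mem_insert, not_or] at hxi
        refine ⟨hxi.1, ?_⟩
        rcases mem_union.mp hxS with h | h
        · exact absurd h hxi.2
        · exact h
    · rintro ⟨hxg, hxj⟩
      have hxi : x ∉ A i := fun h => disjoint_left.mp (hdisj i j hij) h hxj
      have : x ∉ insert g (A i) := by simp [hxg, hxi]
      exact ⟨mem_union_right _ hxj, by simp [this]⟩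
  -- the infimum for P is bounded below
  have hlow : (∑ h ∈ A i, v i h) < ⨅ k : Fin 2, ∑ x ∈ S.filter (fun x => P x = k), v i x := by
    obtain ⟨k, hk⟩ := exists_eq_ciInf_of_finite
      (f := fun k : Fin 2 => ∑ x ∈ S.filter (fun x => P x = k), v i x)
    rw [← hk]
    fin_cases k
    · show (∑ h ∈ A i, v i h) < ∑ x ∈ S.filter (fun x => P x = 0), v i x
      rw [hf0, sum_insert hgAi]
      linarith
    · show (∑ h ∈ A i, v i h) < ∑ x ∈ S.filter (fun x => P x = 1), v i x
      rw [hf1]; exact hlt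
  -- bound μ from below by the value at P
  have hbdd : BddAbove (Set.range fun Q : α → Fin 2 =>
      ⨅ k : Fin 2, ∑ x ∈ S.filter (fun x => Q x = k), v i x) := by
    refine ⟨∑ x ∈ S, v i x, ?_⟩
    rintro y ⟨Q, rfl⟩
    calc (⨅ k : Fin 2, ∑ x ∈ S.filter (fun x => Q x = k), v i x)
        ≤ ∑ x ∈ S.filter (fun x => Q x = 0), v i x :=
          ciInf_le (Set.Finite.bddBelow (Set.finite_range _)) 0
      _ ≤ ∑ x ∈ S, v i x :=
          sum_le_sum_of_subset_of_nonneg (filter_subset _ _) (fun x _ _ => hv i x)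
  have hmu : (⨅ k : Fin 2, ∑ x ∈ S.filter (fun x => P x = k), v i x) ≤ mu (v i) 2 S :=
    le_ciSup hbdd P
  have := hPMMS i j hij
  rw [← hS] at this
  linarith
end
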